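/- Let G be a d-regular graph on n vertices and let ∅ ≠ W ⊊ V satisfy the Cheeger bound with equality: n|E(W, V∖W)|/(d|W||V∖W|) = 1 − λ_2, where λ_2 is the second-largest eigenvalue of A/d. Then 𝟙_W is a linear combination of 𝟙 and an eigenvector of A/d with eigenvalue λ_2, and hence W cannot integrate the λ_2-eigenspace. -/

import Mathlib

/-!
Let `B = A/d` and `φ = 𝟙_W - (|W|/n) 𝟙`, so that `φ ⟂ 𝟙`, `‖φ‖² = |W||V∖W|/n` and
`‖φ‖² - ⟪φ, Bφ⟫ = |E(W, V∖W)|/d`; equality in the Cheeger bound says exactly that `φ` attains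
`⟪φ, Bφ⟫ = λ₂ ‖φ‖²`. Since `λ₂` bounds every eigenvalue on `𝟙^⊥`, the shifted matrix
`C = B + (λ₂ - 1)/n · 𝟙𝟙ᵀ`, which agrees with `B` on `𝟙^⊥` and has `𝟙` as a `λ₂`-eigenvector,
has all its eigenvalues `≤ λ₂`. Hence `λ₂ I - C` is positive semidefinite, and a vector on which
its quadratic form vanishes lies in its kernel: `Bφ = Cφ = λ₂ φ`. Finally
`∑_{x ∈ W} φ x = ‖φ‖² > 0`, so `W` does not integrate `φ`.
-/

open Matrix Finset

namespace Matrix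

variable {ι : Type*} [Fintype ι]

theorem IsSymm.dotProduct_mulVec_comm {A : Matrix ι ι ℝ} (hA : A.IsSymm) (x y : ι → ℝ) :
    x ⬝ᵥ A *ᵥ y = A *ᵥ x ⬝ᵥ y := by
  rw [dotProduct_mulVec, ← mulVec_transpose, hA.eq]

theorem IsSymm.dotProduct_sub_dotProduct_mulVec_sub_smul {B : Matrix ι ι ℝ} (hB : B.IsSymm)
    {u : ι → ℝ} (hu : B *ᵥ u = u) (x : ι → ℝ) (c : ℝ) :
    (x - c • u) ⬝ᵥ (x - c • u) - (x - c • u) ⬝ᵥ B *ᵥ (x - c • u) = x ⬝ᵥ x - x ⬝ᵥ B *ᵥ x := by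
  rw [mulVec_sub, mulVec_smul, hu]
  simp only [dotProduct_sub, sub_dotProduct, dotProduct_smul, smul_dotProduct,
    hB.dotProduct_mulVec_comm u x, hu, dotProduct_comm x u, smul_eq_mul]
  ring

theorem IsSymm.posSemidef_smul_one_sub [DecidableEq ι] {C : Matrix ι ι ℝ} (hC : C.IsSymm)
    {lam : ℝ} (hle : ∀ μ ψ, ψ ≠ 0 → C *ᵥ ψ = μ • ψ → μ ≤ lam) : (lam • 1 - C).PosSemidef := by
  have hD : (lam • 1 - C).IsHermitian :=
    isHermitian_iff_isSymm.2 ((isSymm_one.smul lam).sub hC)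
  refine hD.posSemidef_iff_eigenvalues_nonneg.2 fun i ↦ ?_
  have he := hD.mulVec_eigenvectorBasis i
  rw [sub_mulVec, smul_mulVec, one_mulVec] at he
  have hCe : C *ᵥ ⇑(hD.eigenvectorBasis i) =
      (lam - hD.eigenvalues i) • ⇑(hD.eigenvectorBasis i) := by
    rw [sub_smul, ← he]
    abel
  have hne := (WithLp.ofLp_eq_zero 2).ne.2 <| hD.eigenvectorBasis.orthonormal.ne_zero i
  simpa using hle _ _ hne hCe

theorem IsSymm.mulVec_eq_smul_of_dotProduct_mulVec_eq [DecidableEq ι] {C : Matrix ι ι ℝ}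
    (hC : C.IsSymm) {lam : ℝ} (hle : ∀ μ ψ, ψ ≠ 0 → C *ᵥ ψ = μ • ψ → μ ≤ lam) {x : ι → ℝ}
    (hx : x ⬝ᵥ C *ᵥ x = lam * (x ⬝ᵥ x)) : C *ᵥ x = lam • x := by
  have hker := ((hC.posSemidef_smul_one_sub hle).dotProduct_mulVec_zero_iff x).1 <| by
    rw [star_trivial, sub_mulVec, smul_mulVec, one_mulVec, dotProduct_sub, dotProduct_smul, hx,
      smul_eq_mul, sub_self]
  rw [sub_mulVec, smul_mulVec, one_mulVec, sub_eq_zero] at hker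
  exact hker.symm

/-- The equality case of the Rayleigh bound on the orthogonal complement of an eigenvector. -/
theorem IsSymm.mulVec_eq_smul_of_dotProduct_mulVec_eq_of_orthogonal [DecidableEq ι]
    {B : Matrix ι ι ℝ} (hB : B.IsSymm) {u : ι → ℝ} {α lam : ℝ} (hu : B *ᵥ u = α • u)
    (hmax : ∀ μ ψ, ψ ≠ 0 → u ⬝ᵥ ψ = 0 → B *ᵥ ψ = μ • ψ → μ ≤ lam) {x : ι → ℝ}
    (hux : u ⬝ᵥ x = 0) (hx : x ⬝ᵥ B *ᵥ x = lam * (x ⬝ᵥ x)) : B *ᵥ x = lam • x := by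
  set C := B + ((lam - α) / (u ⬝ᵥ u)) • vecMulVec u u
  have hCB : ∀ ψ, u ⬝ᵥ ψ = 0 → C *ᵥ ψ = B *ᵥ ψ := by
    intro ψ hψ
    simp [C, add_mulVec, smul_mulVec, vecMulVec_mulVec, hψ]
  have hCu : C *ᵥ u = lam • u := by
    by_cases hu0 : u = 0
    · simp [hu0]
    have huu : u ⬝ᵥ u ≠ 0 := by rwa [Ne, dotProduct_self_eq_zero]
    simp only [C, add_mulVec, smul_mulVec, vecMulVec_mulVec, hu, op_smul_eq_smul, ← smul_assoc]
    rw [smul_eq_mul, div_mul_cancel₀ _ huu, ← add_smul, add_sub_cancel]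
  have hC : C.IsSymm := hB.add ((IsSymm.ext fun i j ↦ by simp [vecMulVec, mul_comm]).smul _)
  have hle : ∀ μ ψ, ψ ≠ 0 → C *ᵥ ψ = μ • ψ → μ ≤ lam := by
    intro μ ψ hψ hCψ
    by_contra hlt
    -- eigenvectors of the symmetric `C` for distinct eigenvalues are orthogonal
    have huψ : u ⬝ᵥ ψ = 0 := by
      have h := hC.dotProduct_mulVec_comm u ψ
      rw [hCψ, hCu, dotProduct_smul, smul_dotProduct, smul_eq_mul, smul_eq_mul] at h
      exact (mul_eq_mul_right_iff.1 h).resolve_left fun h ↦ hlt h.le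
    exact hlt (hmax μ ψ hψ huψ (hCB ψ huψ ▸ hCψ))
  rw [← hCB x hux] at hx ⊢
  exact hC.mulVec_eq_smul_of_dotProduct_mulVec_eq hle hx

end Matrix

namespace Finset

variable {V : Type*} [Fintype V] (W : Finset V)

theorem card_div_card_univ_mul_card_univ : (#W / Fintype.card V : ℝ) * Fintype.card V = #W :=
  div_mul_cancel_of_imp fun h ↦ by
    exact_mod_cast Nat.eq_zero_of_le_zero ((card_le_univ W).trans_eq (by exact_mod_cast h))

variable [DecidableEq V]

theorem indicator_dotProduct (x : V → ℝ) :
    (fun v ↦ if v ∈ W then (1 : ℝ) else 0) ⬝ᵥ x = ∑ v ∈ W, x v := by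
  simp [dotProduct, ite_mul, sum_ite_mem]

/-- The orthogonal projection of `𝟙_W` onto `𝟙^⊥`. -/
noncomputable def centeredIndicator : V → ℝ :=
  (fun v ↦ if v ∈ W then 1 else 0) - (#W / Fintype.card V : ℝ) • 1

theorem one_dotProduct_centeredIndicator : 1 ⬝ᵥ W.centeredIndicator = 0 := by
  rw [centeredIndicator, dotProduct_sub, dotProduct_smul, dotProduct_comm, indicator_dotProduct,
    dotProduct_one]
  simp only [Pi.one_apply, sum_const, card_univ, nsmul_eq_mul, mul_one, smul_eq_mul]
  rw [card_div_card_univ_mul_card_univ, sub_self]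

theorem indicator_dotProduct_centeredIndicator :
    (fun v ↦ if v ∈ W then (1 : ℝ) else 0) ⬝ᵥ W.centeredIndicator
      = W.centeredIndicator ⬝ᵥ W.centeredIndicator := by
  nth_rw 2 [centeredIndicator]
  rw [sub_dotProduct, smul_dotProduct, one_dotProduct_centeredIndicator, smul_zero, sub_zero]

theorem centeredIndicator_dotProduct_self :
    W.centeredIndicator ⬝ᵥ W.centeredIndicator = #W * #Wᶜ / Fintype.card V := by
  rw [← indicator_dotProduct_centeredIndicator, centeredIndicator, dotProduct_sub,
    dotProduct_smul, indicator_dotProduct, indicator_dotProduct]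
  have hcompl : (#Wᶜ : ℝ) = Fintype.card V - #W := by
    rw [eq_sub_iff_add_eq, ← Nat.cast_add, card_compl_add_card]
  simp only [sum_ite_mem, inter_self, Pi.one_apply, sum_const, nsmul_eq_mul, mul_one, smul_eq_mul,
    hcompl]
  nth_rw 1 [← W.card_div_card_univ_mul_card_univ]
  ring

end Finset

namespace SimpleGraph

variable {V : Type*} [Fintype V] {G : SimpleGraph V} [DecidableRel G.Adj] {d : ℕ}

theorem IsRegularOfDegree.inv_smul_adjMatrix_mulVec_one (hd : G.IsRegularOfDegree d)
    (hd0 : d ≠ 0) : ((d : ℝ)⁻¹ • G.adjMatrix ℝ) *ᵥ 1 = 1 := by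
  ext v
  simp only [smul_mulVec, Pi.smul_apply, adjMatrix_mulVec_apply, Pi.one_apply, sum_const,
    smul_eq_mul, nsmul_eq_mul, mul_one]
  rw [card_neighborFinset_eq_degree, hd v]
  exact inv_mul_cancel₀ (by exact_mod_cast hd0)

variable [DecidableEq V]

theorem IsRegularOfDegree.indicator_dotProduct_adjMatrix_mulVec_indicator
    (hd : G.IsRegularOfDegree d) (W : Finset V) :
    (fun v ↦ if v ∈ W then (1 : ℝ) else 0) ⬝ᵥ G.adjMatrix ℝ *ᵥ (fun v ↦ if v ∈ W then 1 else 0)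
      = d * #W - ∑ u ∈ W, ∑ v ∈ Wᶜ, if G.Adj u v then (1 : ℝ) else 0 := by
  have hrow : ∀ u, ∑ v ∈ W, (if G.Adj u v then (1 : ℝ) else 0)
      + ∑ v ∈ Wᶜ, (if G.Adj u v then (1 : ℝ) else 0) = d := by
    intro u
    rw [sum_add_sum_compl, ← degree_eq_sum_if_adj, hd u]
  have hAχ : ∀ u, (G.adjMatrix ℝ *ᵥ fun v ↦ if v ∈ W then 1 else 0) u
      = ∑ v ∈ W, if G.Adj u v then (1 : ℝ) else 0 := by
    intro u
    rw [mulVec, dotProduct_comm, Finset.indicator_dotProduct]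
    rfl
  rw [Finset.indicator_dotProduct, eq_sub_iff_add_eq, ← sum_add_distrib]
  simp only [hAχ, hrow, sum_const, nsmul_eq_mul, mul_comm]

theorem IsRegularOfDegree.normalizedLaplacian_form_centeredIndicator (hd : G.IsRegularOfDegree d)
    (hd0 : d ≠ 0) (W : Finset V) :
    W.centeredIndicator ⬝ᵥ W.centeredIndicator
        - W.centeredIndicator ⬝ᵥ ((d : ℝ)⁻¹ • G.adjMatrix ℝ) *ᵥ W.centeredIndicator
      = (∑ u ∈ W, ∑ v ∈ Wᶜ, if G.Adj u v then (1 : ℝ) else 0) / d := by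
  have hB : ((d : ℝ)⁻¹ • G.adjMatrix ℝ).IsSymm := G.isSymm_adjMatrix.smul _
  rw [Finset.centeredIndicator,
    hB.dotProduct_sub_dotProduct_mulVec_sub_smul (hd.inv_smul_adjMatrix_mulVec_one hd0),
    smul_mulVec, dotProduct_smul, hd.indicator_dotProduct_adjMatrix_mulVec_indicator,
    Finset.indicator_dotProduct, smul_eq_mul]
  simp only [sum_ite_mem, inter_self, sum_const, nsmul_eq_mul, mul_one]
  field_simp
  ring

end SimpleGraph

theorem stmt16_general {V : Type*} [Fintype V] [DecidableEq V]
    (G : SimpleGraph V) [DecidableRel G.Adj]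
    (d : ℕ) (hd : G.IsRegularOfDegree d) (hd0 : 0 < d) (lam2 : ℝ)
    (hmax : ∀ (μ : ℝ) (ψ : V → ℝ), ψ ≠ 0 → (∑ v, ψ v = 0) →
      ((d : ℝ)⁻¹ • G.adjMatrix ℝ).mulVec ψ = μ • ψ → μ ≤ lam2)
    (W : Finset V) (hW : W.Nonempty) (hWproper : W ≠ Finset.univ)
    (hcheeg : (Fintype.card V : ℝ) *
        (∑ u ∈ W, ∑ v ∈ Wᶜ, if G.Adj u v then (1 : ℝ) else 0)
        / ((d : ℝ) * (W.card : ℝ) * ((Wᶜ : Finset V).card : ℝ)) = 1 - lam2) :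
    (∃ (c : ℝ) (φ : V → ℝ),
        ((d : ℝ)⁻¹ • G.adjMatrix ℝ).mulVec φ = lam2 • φ ∧
        ∀ x, (if x ∈ W then (1 : ℝ) else 0) = c + φ x) ∧
    ∃ φ : V → ℝ,
      ((d : ℝ)⁻¹ • G.adjMatrix ℝ).mulVec φ = lam2 • φ ∧
      (∑ v, φ v = 0) ∧ ∑ x ∈ W, φ x ≠ 0 := by
  set cut := ∑ u ∈ W, ∑ v ∈ Wᶜ, if G.Adj u v then (1 : ℝ) else 0
  have hW0 : (0 : ℝ) < #W := by exact_mod_cast hW.card_pos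
  have hWc0 : (0 : ℝ) < #Wᶜ := by
    exact_mod_cast ((compl_ne_univ_iff_nonempty Wᶜ).1 (by rwa [compl_compl])).card_pos
  have hn : (0 : ℝ) < Fintype.card V := by exact_mod_cast hW.card_pos.trans_le (card_le_univ W)
  have hcut := hd.normalizedLaplacian_form_centeredIndicator hd0.ne' W
  have hφφ := W.centeredIndicator_dotProduct_self
  set φ := W.centeredIndicator
  have hRayleigh : φ ⬝ᵥ ((d : ℝ)⁻¹ • G.adjMatrix ℝ) *ᵥ φ = lam2 * (φ ⬝ᵥ φ) := by
    rw [show lam2 = 1 - Fintype.card V * cut / (d * #W * #Wᶜ) by linarith,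
      show φ ⬝ᵥ ((d : ℝ)⁻¹ • G.adjMatrix ℝ) *ᵥ φ = φ ⬝ᵥ φ - cut / d by linarith, hφφ]
    field_simp
  have heig := (G.isSymm_adjMatrix.smul _).mulVec_eq_smul_of_dotProduct_mulVec_eq_of_orthogonal
    (by rw [one_smul, hd.inv_smul_adjMatrix_mulVec_one hd0.ne'])
    (fun μ ψ hψ h1 ↦ hmax μ ψ hψ (by rwa [← one_dotProduct])) W.one_dotProduct_centeredIndicator
    hRayleigh
  refine ⟨⟨#W / Fintype.card V, φ, heig, fun x ↦ by simp [φ, Finset.centeredIndicator]⟩, φ, heig,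
    (one_dotProduct φ).symm.trans W.one_dotProduct_centeredIndicator, ?_⟩
  rw [← Finset.indicator_dotProduct, W.indicator_dotProduct_centeredIndicator, hφφ]
  positivity

/-- Cheeger-bound tightness. Let `G` be a `d`-regular graph on `n`
vertices, `lam2` the second-largest eigenvalue of `A/d` (the largest eigenvalue on
the orthogonal complement of `𝟙`), and `∅ ≠ W ⊊ V` a subset attaining the Cheeger
bound `n·|E(W, V∖W)| / (d·|W|·|V∖W|) = 1 − lam2`. Then `𝟙_W` is a linear
combination of `𝟙` and an eigenvector of `A/d` with eigenvalue `lam2`, and hence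
`W` cannot integrate the `lam2`-eigenspace. -/
theorem stmt16 {V : Type*} [Fintype V] [DecidableEq V]
    (G : SimpleGraph V) [DecidableRel G.Adj]
    (d : ℕ) (hd : G.IsRegularOfDegree d) (hd0 : 0 < d) (lam2 : ℝ)
    (hmax : ∀ (μ : ℝ) (ψ : V → ℝ), ψ ≠ 0 → (∑ v, ψ v = 0) →
      ((d : ℝ)⁻¹ • G.adjMatrix ℝ).mulVec ψ = μ • ψ → μ ≤ lam2)
    (heig : ∃ ψ : V → ℝ, ψ ≠ 0 ∧ (∑ v, ψ v = 0) ∧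
      ((d : ℝ)⁻¹ • G.adjMatrix ℝ).mulVec ψ = lam2 • ψ)
    (W : Finset V) (hW : W.Nonempty) (hWproper : W ≠ Finset.univ)
    (hcheeg : (Fintype.card V : ℝ) *
        (∑ u ∈ W, ∑ v ∈ Wᶜ, if G.Adj u v then (1 : ℝ) else 0)
        / ((d : ℝ) * (W.card : ℝ) * ((Wᶜ : Finset V).card : ℝ)) = 1 - lam2) :
    (∃ (c : ℝ) (φ : V → ℝ),
        ((d : ℝ)⁻¹ • G.adjMatrix ℝ).mulVec φ = lam2 • φ ∧
        ∀ x, (if x ∈ W then (1 : ℝ) else 0) = c + φ x) ∧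
    ∃ φ : V → ℝ,
      ((d : ℝ)⁻¹ • G.adjMatrix ℝ).mulVec φ = lam2 • φ ∧
      (∑ v, φ v = 0) ∧ ∑ x ∈ W, φ x ≠ 0 :=
  stmt16_general G d hd hd0 lam2 hmax W hW hWproper hcheeg
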